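/- arXiv:2103.10200 — 2 statements merged into one kernel-verified Lean document; each statement's English description precedes it below -/
import Mathlib

section
/- ex(n, Θ_{3,5,5}) = Ω(n^{5/4}); that is, there is a constant c > 0 such that for all sufficiently large n there exists a simple graph on n vertices with at least c·n^{5/4} edges that contains no copy of Θ_{3,5,5}. -/
open SimpleGraph

/-- The generalized theta graph `Θ_{k 0, …, k (ℓ-1)}`: two endpoint vertices
(`Sum.inl 0` and `Sum.inl 1`) joined by `ℓ` internally disjoint paths, the `i`-th
path having `k i` edges (hence `k i - 1` internal vertices). -/
def thetaGraph (ℓ : ℕ) (k : Fin ℓ → ℕ) :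
    SimpleGraph (Fin 2 ⊕ (Σ i : Fin ℓ, Fin (k i - 1))) :=
  SimpleGraph.fromRel (fun a b =>
    (a = Sum.inl 0 ∧ b = Sum.inl 1 ∧ ∃ i, k i = 1) ∨
    (∃ (i : Fin ℓ) (j : Fin (k i - 1)), a = Sum.inl 0 ∧ b = Sum.inr ⟨i, j⟩ ∧ (j : ℕ) = 0) ∨
    (∃ (i : Fin ℓ) (j : Fin (k i - 1)), a = Sum.inl 1 ∧ b = Sum.inr ⟨i, j⟩ ∧ (j : ℕ) = k i - 2) ∨
    (∃ (i : Fin ℓ) (j j' : Fin (k i - 1)), a = Sum.inr ⟨i, j⟩ ∧ b = Sum.inr ⟨i, j'⟩ ∧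
      (j' : ℕ) = (j : ℕ) + 1))

/-- `G` contains a copy of `H`: an injective graph homomorphism `H →g G`. -/
def ContainsCopy {α β : Type*} (H : SimpleGraph α) (G : SimpleGraph β) : Prop :=
  ∃ f : H →g G, Function.Injective f

/-- Layer `j` of graph `G` rooted at `r`. -/
def layerSet {V : Type*} (G : SimpleGraph V) (r : V) (j : ℕ) : Set V :=
  {v | G.Reachable r v ∧ G.dist r v = j}

/-- The children of `v` (its neighbours one layer further from the root `r`). -/
def childSet {V : Type*} (G : SimpleGraph V) (r v : V) : Set V :=
  {u | G.Adj v u ∧ G.dist r u = G.dist r v + 1}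

/-- The parents of `v` (its neighbours one layer closer to the root `r`). -/
def parentSet {V : Type*} (G : SimpleGraph V) (r v : V) : Set V :=
  {u | G.Adj v u ∧ G.dist r u + 1 = G.dist r v}

/-- `u` is a descendant of `a` (w.r.t. the root `r`). -/
def IsDescendantOf {V : Type*} (G : SimpleGraph V) (r a u : V) : Prop :=
  G.Reachable a u ∧ G.dist r a + G.dist a u = G.dist r u

/-- The restriction of `G` (rooted at `r`) to its first `s` layers is a regular tree of
type `(d, s)`: every vertex in layers `0, …, s-1` has exactly `d` children and every
vertex in layers `1, …, s` has exactly one parent. -/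
def IsRegularTreeOfType {V : Type*} (G : SimpleGraph V) (r : V) (d s : ℕ) : Prop :=
  (∀ j < s, ∀ v ∈ layerSet G r j, (childSet G r v).ncard = d) ∧
  (∀ j, 1 ≤ j → j ≤ s → ∀ v ∈ layerSet G r j, (parentSet G r v).ncard = 1)

/-- `G` rooted at `r` is a regular almost-tree of type `(d, s)`: every vertex in layers
`0, …, s-1` has exactly `d` children, every vertex in layers `1, …, s-1` has exactly one
parent, and for every `v₁` in layer `1` the induced subgraph on the first `s-1` layers is
isomorphic to the induced subgraph on `v₁` together with all its descendants down to
layer `s`. -/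
def IsRegularAlmostTree {V : Type*} (G : SimpleGraph V) (r : V) (d s : ℕ) : Prop :=
  (∀ j < s, ∀ v ∈ layerSet G r j, (childSet G r v).ncard = d) ∧
  (∀ j, 1 ≤ j → j ≤ s - 1 → ∀ v ∈ layerSet G r j, (parentSet G r v).ncard = 1) ∧
  (∀ v₁ ∈ layerSet G r 1, Nonempty
    ((G.induce {u | G.Reachable r u ∧ G.dist r u ≤ s - 1}) ≃g
     (G.induce {u | G.Reachable r u ∧ G.dist r u ≤ s ∧ G.dist r u = G.dist v₁ u + 1})))

/-- The theta graph `Θ_{3,5,5}`: two vertices joined by three internally disjoint paths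
of lengths `3`, `5` and `5`. -/
def theta355 : SimpleGraph (Fin 2 ⊕ (Σ i : Fin 3, Fin ((![3, 5, 5] : Fin 3 → ℕ) i - 1))) :=
  thetaGraph 3 ![3, 5, 5]

namespace VWAux

-- Vandermonde kernel lemma
lemma vand4 {K : Type*} [Field K] {l1 l2 l3 l4 t1 t2 t3 t4 : K}
    (h0 : l1 + l2 + l3 + l4 = 0)
    (h1 : l1*t1 + l2*t2 + l3*t3 + l4*t4 = 0)
    (h2 : l1*t1^2 + l2*t2^2 + l3*t3^2 + l4*t4^2 = 0)
    (h3 : l1*t1^3 + l2*t2^3 + l3*t3^3 + l4*t4^3 = 0)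
    (h12 : t1 ≠ t2) (h13 : t1 ≠ t3) (h14 : t1 ≠ t4) : l1 = 0 := by
  have key : l1 * ((t1 - t2) * ((t1 - t3) * (t1 - t4))) = 0 := by
    linear_combination h3 - (t2+t3+t4)*h2 + (t2*t3+t2*t4+t3*t4)*h1 - (t2*t3*t4)*h0
  rcases mul_eq_zero.mp key with h | h
  · exact h
  · exact absurd h (by
      exact mul_ne_zero (sub_ne_zero_of_ne h12)
        (mul_ne_zero (sub_ne_zero_of_ne h13) (sub_ne_zero_of_ne h14)))

-- core algebraic lemma
lemma core {K : Type*} [Field K] {a c c1 e1 b z b1 d1 : K}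
    (h1 : (a-c1)*b1 + (c1-e1)*d1 + (e1-c)*z + (c-a)*b = 0)
    (h2 : (a-c1)*b1^2 + (c1-e1)*d1^2 + (e1-c)*z^2 + (c-a)*b^2 = 0)
    (h3 : (a-c1)*b1^3 + (c1-e1)*d1^3 + (e1-c)*z^3 + (c-a)*b^3 = 0)
    (hac1 : a ≠ c1) (hb1d1 : b1 ≠ d1) (hb1b : b1 ≠ b) : b1 = z := by
  by_contra hb1z
  have h0 : (a-c1) + (c1-e1) + (e1-c) + (c-a) = 0 := by ring
  have := vand4 h0 h1 h2 h3 hb1d1 hb1z hb1b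
  exact hac1 (sub_eq_zero.mp this)

-- ### infrastructure
abbrev Vθ := Fin 2 ⊕ (Σ i : Fin 3, Fin ((![3, 5, 5] : Fin 3 → ℕ) i - 1))

set_option synthInstance.maxSize 2000 in
set_option maxHeartbeats 1000000 in
instance : DecidableRel theta355.Adj := fun a b =>
  decidable_of_iff _ (SimpleGraph.fromRel_adj _ a b).symm

def θu : Vθ := Sum.inl 0
def θw : Vθ := Sum.inl 1
def θx (i j : ℕ) (hi : i < 3 := by decide)
    (hj : j < (![3,5,5] : Fin 3 → ℕ) ⟨i, hi⟩ - 1 := by decide) : Vθ :=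
  Sum.inr ⟨⟨i, hi⟩, ⟨j, hj⟩⟩


-- the endpoint-swapping automorphism
def θσ : Vθ → Vθ := fun v =>
  match v with
  | .inl x => .inl (1 - x)
  | .inr ⟨i, j⟩ => .inr ⟨i, ⟨(![3,5,5] : Fin 3 → ℕ) i - 2 - (j : ℕ), by
      have := j.isLt; omega⟩⟩

variable {K : Type*} [Field K]


abbrev K4 (K : Type*) := K × K × K × K

/-- incidence relation between a "point" `x` and a "line" `y`. -/
def wrel (x y : K4 K) : Prop :=
  x.2.1 + y.2.1 = x.1 * y.1 ∧ x.2.2.1 + y.2.2.1 = x.1 * y.1^2 ∧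
    x.2.2.2 + y.2.2.2 = x.1 * y.1^3

def WGraph (K : Type*) [Field K] : SimpleGraph (K4 K ⊕ K4 K) where
  Adj x y := match x, y with
    | .inl a, .inr b => wrel a b
    | .inr b, .inl a => wrel a b
    | _, _ => False
  symm := ⟨by rintro (a|a) (b|b) h <;> exact h⟩
  loopless := ⟨by rintro (a|a) h <;> exact h⟩

lemma wadj_iff (a b : K4 K) : (WGraph K).Adj (.inl a) (.inr b) ↔ wrel a b := Iff.rfl

lemma adj_of_inl {x y : K4 K ⊕ K4 K} (h : (WGraph K).Adj x y) (a : K4 K) (hx : x = .inl a) :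
    ∃ b, y = .inr b ∧ wrel a b := by
  subst hx
  cases y with
  | inl c => exact h.elim
  | inr b => exact ⟨b, rfl, h⟩

lemma adj_of_inr {x y : K4 K ⊕ K4 K} (h : (WGraph K).Adj x y) (b : K4 K) (hx : x = .inr b) :
    ∃ a, y = .inl a ∧ wrel a b := by
  subst hx
  cases y with
  | inl a => exact ⟨a, rfl, h⟩
  | inr c => exact h.elim

/-- a neighbour of a point is determined by its first coordinate -/
lemma line_det {a b b' : K4 K} (h : wrel a b) (h' : wrel a b') (e : b.1 = b'.1) : b = b' := by
  obtain ⟨a1, a2, a3, a4⟩ := a; obtain ⟨b1, b2, b3, b4⟩ := b; obtain ⟨c1, c2, c3, c4⟩ := b'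
  obtain ⟨h1, h2, h3⟩ := h; obtain ⟨h1', h2', h3'⟩ := h'
  simp only at *
  subst e
  refine Prod.ext rfl (Prod.ext ?_ (Prod.ext ?_ ?_)) <;> simp
  · linear_combination h1 - h1'
  · linear_combination h2 - h2'
  · linear_combination h3 - h3'

lemma point_det {a a' b : K4 K} (h : wrel a b) (h' : wrel a' b) (e : a.1 = a'.1) : a = a' := by
  obtain ⟨a1, a2, a3, a4⟩ := a; obtain ⟨c1, c2, c3, c4⟩ := a'; obtain ⟨b1, b2, b3, b4⟩ := b
  obtain ⟨h1, h2, h3⟩ := h; obtain ⟨h1', h2', h3'⟩ := h'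
  simp only at *
  subst e
  refine Prod.ext rfl (Prod.ext ?_ (Prod.ext ?_ ?_)) <;> simp
  · linear_combination h1 - h1'
  · linear_combination h2 - h2'
  · linear_combination h3 - h3'

lemma key (g : theta355 →g WGraph K) (hg : Function.Injective g) (U : K4 K)
    (hu : g θu = Sum.inl U) : False := by
  have neq : ∀ {x y : Vθ}, x ≠ y → g x ≠ g y := fun hxy h => hxy (hg h)
  -- images along the 3-path
  obtain ⟨L, hL, rUL⟩ := adj_of_inl (g.map_adj (show theta355.Adj θu (θx 0 0) by decide)) U hu
  obtain ⟨P, hP, rPL⟩ := adj_of_inr (g.map_adj (show theta355.Adj (θx 0 0) (θx 0 1) by decide)) L hL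
  obtain ⟨W, hW, rPW⟩ := adj_of_inl (g.map_adj (show theta355.Adj (θx 0 1) θw by decide)) P hP
  -- images along the first 5-path
  obtain ⟨L1, hL1, rUL1⟩ := adj_of_inl (g.map_adj (show theta355.Adj θu (θx 1 0) by decide)) U hu
  obtain ⟨P1, hP1, rP1L1⟩ := adj_of_inr (g.map_adj (show theta355.Adj (θx 1 0) (θx 1 1) by decide)) L1 hL1
  obtain ⟨M1, hM1, rP1M1⟩ := adj_of_inl (g.map_adj (show theta355.Adj (θx 1 1) (θx 1 2) by decide)) P1 hP1
  obtain ⟨R1, hR1, rR1M1⟩ := adj_of_inr (g.map_adj (show theta355.Adj (θx 1 2) (θx 1 3) by decide)) M1 hM1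
  have rR1W : wrel R1 W := by
    obtain ⟨W', hW', r⟩ := adj_of_inl (g.map_adj (show theta355.Adj (θx 1 3) θw by decide)) R1 hR1
    cases Sum.inr.inj (hW'.symm.trans hW); exact r
  -- images along the second 5-path
  obtain ⟨L2, hL2, rUL2⟩ := adj_of_inl (g.map_adj (show theta355.Adj θu (θx 2 0) by decide)) U hu
  obtain ⟨P2, hP2, rP2L2⟩ := adj_of_inr (g.map_adj (show theta355.Adj (θx 2 0) (θx 2 1) by decide)) L2 hL2
  obtain ⟨M2, hM2, rP2M2⟩ := adj_of_inl (g.map_adj (show theta355.Adj (θx 2 1) (θx 2 2) by decide)) P2 hP2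
  obtain ⟨R2, hR2, rR2M2⟩ := adj_of_inr (g.map_adj (show theta355.Adj (θx 2 2) (θx 2 3) by decide)) M2 hM2
  have rR2W : wrel R2 W := by
    obtain ⟨W', hW', r⟩ := adj_of_inl (g.map_adj (show theta355.Adj (θx 2 3) θw by decide)) R2 hR2
    cases Sum.inr.inj (hW'.symm.trans hW); exact r
  -- first-coordinate distinctness facts
  have dUP1 : U.1 ≠ P1.1 := fun e =>
    neq (show θu ≠ θx 1 1 by decide)
      (by rw [hu, hP1]; exact congrArg Sum.inl (point_det rUL1 rP1L1 e))
  have dUP2 : U.1 ≠ P2.1 := fun e =>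
    neq (show θu ≠ θx 2 1 by decide)
      (by rw [hu, hP2]; exact congrArg Sum.inl (point_det rUL2 rP2L2 e))
  have dL1M1 : L1.1 ≠ M1.1 := fun e =>
    neq (show θx 1 0 ≠ θx 1 2 by decide)
      (by rw [hL1, hM1]; exact congrArg Sum.inr (line_det rP1L1 rP1M1 e))
  have dL2M2 : L2.1 ≠ M2.1 := fun e =>
    neq (show θx 2 0 ≠ θx 2 2 by decide)
      (by rw [hL2, hM2]; exact congrArg Sum.inr (line_det rP2L2 rP2M2 e))
  have dL1L : L1.1 ≠ L.1 := fun e =>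
    neq (show θx 1 0 ≠ θx 0 0 by decide)
      (by rw [hL1, hL]; exact congrArg Sum.inr (line_det rUL1 rUL e))
  have dL2L : L2.1 ≠ L.1 := fun e =>
    neq (show θx 2 0 ≠ θx 0 0 by decide)
      (by rw [hL2, hL]; exact congrArg Sum.inr (line_det rUL2 rUL e))
  have dL1L2 : L1 ≠ L2 := fun e =>
    neq (show θx 1 0 ≠ θx 2 0 by decide) (by rw [hL1, hL2, e])
  -- coordinates
  obtain ⟨ua, u2, u3, u4⟩ := U
  obtain ⟨lb, l2, l3, l4⟩ := L
  obtain ⟨pa, q2, q3, q4⟩ := P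
  obtain ⟨wb, w2, w3, w4⟩ := W
  obtain ⟨xb, x2, x3, x4⟩ := L1
  obtain ⟨ca, c2, c3, c4⟩ := P1
  obtain ⟨mb, m2, m3, m4⟩ := M1
  obtain ⟨ra, r2, r3, r4⟩ := R1
  obtain ⟨yb, y2, y3, y4⟩ := L2
  obtain ⟨da, d2, d3, d4⟩ := P2
  obtain ⟨nb, n2, n3, n4⟩ := M2
  obtain ⟨sa, s2, s3, s4⟩ := R2
  obtain ⟨A1, A2, A3⟩ := rUL
  obtain ⟨B1, B2, B3⟩ := rPL
  obtain ⟨C1, C2, C3⟩ := rPW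
  obtain ⟨D1, D2, D3⟩ := rUL1
  obtain ⟨E1, E2, E3⟩ := rP1L1
  obtain ⟨F1, F2, F3⟩ := rP1M1
  obtain ⟨G1, G2, G3⟩ := rR1M1
  obtain ⟨H1, H2, H3⟩ := rR1W
  obtain ⟨D1', D2', D3'⟩ := rUL2
  obtain ⟨E1', E2', E3'⟩ := rP2L2
  obtain ⟨F1', F2', F3'⟩ := rP2M2
  obtain ⟨G1', G2', G3'⟩ := rR2M2
  obtain ⟨H1', H2', H3'⟩ := rR2W
  simp only at A1 A2 A3 B1 B2 B3 C1 C2 C3 D1 D2 D3 E1 E2 E3 F1 F2 F3 G1 G2 G3 H1 H2 H3 D1' D2' D3' E1' E2' E3' F1' F2' F3' G1' G2' G3' H1' H2' H3' dUP1 dUP2 dL1M1 dL2M2 dL1L dL2L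
  -- telescoped equations
  have hΔ11 : (ua-ca)*xb + (ca-ra)*mb + (ra-pa)*wb + (pa-ua)*lb = 0 := by
    linear_combination -D1 + E1 - F1 + G1 - H1 + A1 - B1 + C1
  have hΔ12 : (ua-ca)*xb^2 + (ca-ra)*mb^2 + (ra-pa)*wb^2 + (pa-ua)*lb^2 = 0 := by
    linear_combination -D2 + E2 - F2 + G2 - H2 + A2 - B2 + C2
  have hΔ13 : (ua-ca)*xb^3 + (ca-ra)*mb^3 + (ra-pa)*wb^3 + (pa-ua)*lb^3 = 0 := by
    linear_combination -D3 + E3 - F3 + G3 - H3 + A3 - B3 + C3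
  have hΔ21 : (ua-da)*yb + (da-sa)*nb + (sa-pa)*wb + (pa-ua)*lb = 0 := by
    linear_combination -D1' + E1' - F1' + G1' - H1' + A1 - B1 + C1
  have hΔ22 : (ua-da)*yb^2 + (da-sa)*nb^2 + (sa-pa)*wb^2 + (pa-ua)*lb^2 = 0 := by
    linear_combination -D2' + E2' - F2' + G2' - H2' + A2 - B2 + C2
  have hΔ23 : (ua-da)*yb^3 + (da-sa)*nb^3 + (sa-pa)*wb^3 + (pa-ua)*lb^3 = 0 := by
    linear_combination -D3' + E3' - F3' + G3' - H3' + A3 - B3 + C3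
  have e1 : xb = wb := core hΔ11 hΔ12 hΔ13 dUP1 dL1M1 dL1L
  have e2 : yb = wb := core hΔ21 hΔ22 hΔ23 dUP2 dL2M2 dL2L
  exact dL1L2 (line_det (show wrel (ua,u2,u3,u4) (xb,x2,x3,x4) from ⟨D1,D2,D3⟩)
    (show wrel (ua,u2,u3,u4) (yb,y2,y3,y4) from ⟨D1',D2',D3'⟩)
    (show xb = yb from e1.trans e2.symm))

lemma hσadj : ∀ a b : Vθ, theta355.Adj a b → theta355.Adj (θσ a) (θσ b) := by decide

lemma wfree : ¬ ContainsCopy theta355 (WGraph K) := by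
  rintro ⟨f, hf⟩
  cases hfu : f θu with
  | inl U => exact key f hf U hfu
  | inr B =>
    obtain ⟨P0, hP0, _⟩ := adj_of_inr (f.map_adj (show theta355.Adj θu (θx 0 0) by decide)) B hfu
    obtain ⟨B1, hB1, _⟩ := adj_of_inl (f.map_adj
      (show theta355.Adj (θx 0 0) (θx 0 1) by decide)) P0 hP0
    obtain ⟨U', hU', _⟩ := adj_of_inr (f.map_adj
      (show theta355.Adj (θx 0 1) θw by decide)) B1 hB1
    let σh : theta355 →g theta355 := ⟨θσ, fun {a b} h => hσadj a b h⟩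
    have hgi : Function.Injective (f.comp σh) := fun x y h =>
      (show Function.Injective θσ by decide) (hf h)
    refine key (f.comp σh) hgi U' ?_
    have h1 : (f.comp σh) θu = f θw := by
      have : θσ θu = θw := by decide
      show f (θσ θu) = f θw
      rw [this]
    rw [h1, hU']

-- ### transferring along an embedding
lemma wfree_map {n : ℕ} (ι : (K4 K ⊕ K4 K) ↪ Fin n) :
    ¬ ContainsCopy theta355 ((WGraph K).map ι) := by
  rintro ⟨f, hf⟩
  have hrange : ∀ v : Vθ, ∃ a, ι a = f v := by
    intro v
    obtain ⟨v', hv'⟩ := (show ∀ v : Vθ, ∃ v', theta355.Adj v v' by decide) v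
    obtain ⟨a, b, -, ha, -⟩ := (SimpleGraph.map_adj ι (WGraph K) _ _).mp (f.map_adj hv')
    exact ⟨a, ha⟩
  choose gf hgf using hrange
  have hmap : ∀ {x y : Vθ}, theta355.Adj x y → (WGraph K).Adj (gf x) (gf y) := by
    intro x y hxy
    obtain ⟨a, b, hab, ha, hb⟩ := (SimpleGraph.map_adj ι (WGraph K) _ _).mp (f.map_adj hxy)
    have h1 : a = gf x := ι.injective (by rw [ha, hgf])
    have h2 : b = gf y := ι.injective (by rw [hb, hgf])
    rwa [h1, h2] at hab
  have hginj : Function.Injective gf := fun x y h => hf (by rw [← hgf x, ← hgf y, h])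
  exact wfree ⟨⟨gf, fun {x y} h => hmap h⟩, hginj⟩

def nbr (x : K4 K) (t : K) : K4 K :=
  (t, x.1 * t - x.2.1, x.1 * t^2 - x.2.2.1, x.1 * t^3 - x.2.2.2)

lemma wrel_nbr (x : K4 K) (t : K) : wrel x (nbr x t) := by
  refine ⟨?_, ?_, ?_⟩ <;> simp [nbr, wrel] <;> ring

lemma edge_count {n : ℕ} (ι : (K4 K ⊕ K4 K) ↪ Fin n) :
    Nat.card (K4 K × K) ≤ ((WGraph K).map ι).edgeSet.ncard := by
  classical
  set F : K4 K × K → Sym2 (Fin n) := fun xt =>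
    Sym2.mk (ι (Sum.inl xt.1)) (ι (Sum.inr (nbr xt.1 xt.2))) with hF
  have hFinj : Function.Injective F := by
    rintro ⟨x, t⟩ ⟨x', t'⟩ h
    simp only [hF, Sym2.eq_iff] at h
    rcases h with ⟨h1, h2⟩ | ⟨h1, h2⟩
    · have hx : x = x' := Sum.inl.inj (ι.injective h1)
      have hnb : nbr x t = nbr x' t' := Sum.inr.inj (ι.injective h2)
      have ht : t = t' := congrArg (fun z : K4 K => z.1) hnb
      rw [hx, ht]
    · exact absurd (ι.injective h1) (by simp)
  have hsub : Set.range F ⊆ ((WGraph K).map ι).edgeSet := by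
    rintro e ⟨⟨x, t⟩, rfl⟩
    rw [SimpleGraph.mem_edgeSet]
    exact (SimpleGraph.map_adj ι (WGraph K) _ _).mpr ⟨Sum.inl x, Sum.inr (nbr x t), wrel_nbr x t, rfl, rfl⟩
  calc Nat.card (K4 K × K) = (Set.univ : Set (K4 K × K)).ncard := (Set.ncard_univ _).symm
    _ = (F '' Set.univ).ncard := (Set.ncard_image_of_injective _ hFinj).symm
    _ = (Set.range F).ncard := by rw [Set.image_univ]
    _ ≤ ((WGraph K).map ι).edgeSet.ncard := Set.ncard_le_ncard hsub (Set.toFinite _)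


end VWAux

open VWAux

/-- `ex(n, Θ_{3,5,5}) = Ω(n^{5/4})`: there is a constant `c > 0` such
that for all sufficiently large `n` there is a simple graph on `n` vertices with at least
`c * n^{5/4}` edges containing no copy of `Θ_{3,5,5}`. -/
theorem extremal_theta355_lower :
    ∃ c : ℝ, 0 < c ∧ ∃ N : ℕ, ∀ n : ℕ, N ≤ n →
      ∃ G : SimpleGraph (Fin n), ¬ ContainsCopy theta355 G ∧
        c * (n : ℝ) ^ ((5 : ℝ) / 4) ≤ (G.edgeSet.ncard : ℝ) := by
  refine ⟨1/128, by norm_num, 32, fun n hn => ?_⟩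
  -- choose a prime p with m < p ≤ 2m, m = ⌊(n/32)^(1/4)⌋-ish
  set s := Nat.sqrt (n / 32) with hs
  set m := Nat.sqrt s with hm
  have hs1 : 1 ≤ s := by
    rw [hs]
    have : 1 ≤ n / 32 := (Nat.one_le_div_iff (by norm_num)).mpr hn
    exact Nat.le_sqrt.mpr (by omega)
  have hm1 : 1 ≤ m := Nat.le_sqrt.mpr (by omega)
  obtain ⟨p, hp, hmp, hp2m⟩ := Nat.exists_prime_lt_and_le_two_mul m (by omega)
  haveI : Fact p.Prime := ⟨hp⟩
  set K := ZMod p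
  -- p^4 bounds
  have hm2s : m ^ 2 ≤ s := Nat.sqrt_le' s
  have hs2n : s ^ 2 ≤ n / 32 := Nat.sqrt_le' _
  have hupper : 2 * p ^ 4 ≤ n := by
    have h1 : p ^ 4 ≤ 16 * m ^ 4 := by
      calc p ^ 4 ≤ (2 * m) ^ 4 := Nat.pow_le_pow_left hp2m 4
        _ = 16 * m ^ 4 := by ring
    have h2 : m ^ 4 ≤ n / 32 := by
      calc m ^ 4 = (m ^ 2) ^ 2 := by ring
        _ ≤ s ^ 2 := Nat.pow_le_pow_left hm2s 2
        _ ≤ n / 32 := hs2n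
    have h3 : 32 * (n / 32) ≤ n := Nat.mul_div_le n 32
    omega
  have hlower : n / 32 + 1 ≤ p ^ 4 := by
    have h1 : s + 1 ≤ p ^ 2 := by
      have ha : s < (m + 1) ^ 2 := Nat.lt_succ_sqrt' s
      have h2 : (m + 1) ^ 2 ≤ p ^ 2 := Nat.pow_le_pow_left (by omega) 2
      exact le_trans (Nat.succ_le_of_lt ha) h2
    have h2 : n / 32 + 1 ≤ (s + 1) ^ 2 := by
      have ha : n / 32 < (s + 1) ^ 2 := by rw [hs]; exact Nat.lt_succ_sqrt' (n / 32)
      exact Nat.succ_le_of_lt ha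
    calc n / 32 + 1 ≤ (s + 1) ^ 2 := h2
      _ ≤ (p ^ 2) ^ 2 := Nat.pow_le_pow_left h1 2
      _ = p ^ 4 := by ring
  -- the embedding into Fin n
  have hcard : Fintype.card (K4 K ⊕ K4 K) ≤ n := by
    have : Fintype.card (K4 K ⊕ K4 K) = 2 * p ^ 4 := by
      simp [K4, K, ZMod.card p]
      ring
    omega
  let ι : (K4 K ⊕ K4 K) ↪ Fin n :=
    (Fintype.equivFin _).toEmbedding.trans (Fin.castLEEmb hcard)
  refine ⟨(WGraph K).map ι, wfree_map ι, ?_⟩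
  -- edge count
  have hcount : (p ^ 5 : ℕ) ≤ ((WGraph K).map ι).edgeSet.ncard := by
    have h1 : Nat.card (K4 K × K) = p ^ 5 := by
      simp [K4, K, Nat.card_prod, Nat.card_eq_fintype_card, ZMod.card p]
      ring
    rw [← h1]
    exact edge_count ι
  -- real arithmetic
  have hp0 : (0 : ℝ) ≤ (p : ℝ) := Nat.cast_nonneg p
  have hn32 : (n : ℝ) ≤ 32 * (p : ℝ) ^ 4 := by
    have h1 : n < 32 * (n / 32 + 1) := by omega
    have h2 : (n : ℝ) < 32 * ((n / 32 : ℕ) + 1 : ℝ) := by exact_mod_cast h1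
    have h3 : ((n / 32 : ℕ) + 1 : ℝ) ≤ ((p : ℝ)) ^ 4 := by exact_mod_cast hlower
    nlinarith
  have hn0 : (0 : ℝ) ≤ (n : ℝ) := Nat.cast_nonneg n
  have key1 : (n : ℝ) ^ ((5 : ℝ) / 4) ≤ (32 * (p : ℝ) ^ 4) ^ ((5 : ℝ) / 4) :=
    Real.rpow_le_rpow hn0 hn32 (by norm_num)
  have key2 : (32 * (p : ℝ) ^ 4) ^ ((5 : ℝ) / 4)
      = (32 : ℝ) ^ ((5 : ℝ) / 4) * ((p : ℝ) ^ (4 : ℕ)) ^ ((5 : ℝ) / 4) :=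
    Real.mul_rpow (by norm_num) (by positivity)
  have key3 : ((p : ℝ) ^ (4 : ℕ)) ^ ((5 : ℝ) / 4) = (p : ℝ) ^ (5 : ℕ) := by
    rw [← Real.rpow_natCast (p : ℝ) 4, ← Real.rpow_mul hp0, ← Real.rpow_natCast (p : ℝ) 5]
    norm_num
  have key4 : (32 : ℝ) ^ ((5 : ℝ) / 4) ≤ 128 := by
    have h32 : (32 : ℝ) = (2 : ℝ) ^ (5 : ℕ) := by norm_num
    rw [h32, ← Real.rpow_natCast (2 : ℝ) 5, ← Real.rpow_mul (by norm_num)]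
    calc (2 : ℝ) ^ ((5 : ℝ) * (5 / 4)) ≤ (2 : ℝ) ^ ((7 : ℝ)) :=
          Real.rpow_le_rpow_of_exponent_le (by norm_num) (by norm_num)
      _ = 128 := by
          rw [show (7 : ℝ) = ((7 : ℕ) : ℝ) by norm_num, Real.rpow_natCast]
          norm_num
  have hfinal : (n : ℝ) ^ ((5 : ℝ) / 4) ≤ 128 * (p : ℝ) ^ (5 : ℕ) := by
    calc (n : ℝ) ^ ((5 : ℝ) / 4) ≤ (32 * (p : ℝ) ^ 4) ^ ((5 : ℝ) / 4) := key1
      _ = (32 : ℝ) ^ ((5 : ℝ) / 4) * ((p : ℝ) ^ (4 : ℕ)) ^ ((5 : ℝ) / 4) := key2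
      _ = (32 : ℝ) ^ ((5 : ℝ) / 4) * (p : ℝ) ^ (5 : ℕ) := by rw [key3]
      _ ≤ 128 * (p : ℝ) ^ (5 : ℕ) := by
          have : (0 : ℝ) ≤ (p : ℝ) ^ (5 : ℕ) := by positivity
          nlinarith [key4]
  have hcast : ((p : ℝ)) ^ (5 : ℕ) ≤ (((WGraph K).map ι).edgeSet.ncard : ℝ) := by
    exact_mod_cast hcount
  calc (1 / 128 : ℝ) * (n : ℝ) ^ ((5 : ℝ) / 4)
      ≤ (1 / 128 : ℝ) * (128 * (p : ℝ) ^ (5 : ℕ)) := by nlinarith [hfinal]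
    _ = (p : ℝ) ^ (5 : ℕ) := by ring
    _ ≤ _ := hcast
end

section
/- Let q be a prime power and G(q) the bipartite incidence graph between the points of F_q⁴ and the lines with directions v_z = (1, z, z², z³), z ∈ F_q. If p₁ℓ₁p₂ℓ₂p₃ℓ₃p₄ℓ₄p₁ is a cycle of length 8 in G(q) (with points p_i and lines ℓ_i), and v₁, v₂, v₃, v₄ are the directions of ℓ₁, ℓ₂, ℓ₃, ℓ₄ respectively, then v₁ = v₃, v₂ = v₄, and v₁ ≠ v₂. -/
open SimpleGraph

/-- The moment-curve direction `v_z = (1, z, z², z³)` in `F⁴`. -/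
def mvec {F : Type*} [Field F] (z : F) : Fin 4 → F := ![1, z, z ^ 2, z ^ 3]

/-- The line through `x` in direction `v_z`: `{x + y • v_z : y ∈ F}`. -/
def lineThrough {F : Type*} [Field F] (x : Fin 4 → F) (z : F) : Set (Fin 4 → F) :=
  {p | ∃ y : F, p = x + y • mvec z}

/-- A subset of `F⁴` is a *moment line* if it is a line in direction `v_z` for some
`z ∈ F`. -/
def IsMomentLine {F : Type*} [Field F] (l : Set (Fin 4 → F)) : Prop :=
  ∃ x z, l = lineThrough x z

/-- The vertex type of the point–line incidence graph: points of `F⁴` on the left,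
moment lines on the right. -/
def IncVert (F : Type*) [Field F] : Type _ :=
  (Fin 4 → F) ⊕ {l : Set (Fin 4 → F) // IsMomentLine l}

/-- The bipartite point–line incidence graph `G(q)`: a point `p` is adjacent to a moment
line `l` iff `p ∈ l`. -/
def incGraph (F : Type*) [Field F] : SimpleGraph (IncVert F) :=
  SimpleGraph.fromRel (fun a b =>
    ∃ (p : Fin 4 → F) (l : {l : Set (Fin 4 → F) // IsMomentLine l}),
      a = Sum.inl p ∧ b = Sum.inr l ∧ p ∈ l.1)

lemma lineThrough_eq_of_mem {F : Type*} [Field F] {x q : Fin 4 → F} {z : F}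
    (h : q ∈ lineThrough x z) : lineThrough x z = lineThrough q z := by
  obtain ⟨y, rfl⟩ := h
  ext r
  constructor
  · rintro ⟨y', rfl⟩
    exact ⟨y' - y, by module⟩
  · rintro ⟨y', rfl⟩
    exact ⟨y + y', by module⟩


/-- (Lemma 13 of the paper.) If `p₁ℓ₁p₂ℓ₂p₃ℓ₃p₄ℓ₄p₁` is an 8-cycle in
the incidence graph `G(q)` — four distinct points `p i`, four distinct moment lines
`L i = lineThrough (x i) (z i)`, each `L i` containing `p i` and `p (i+1)` — then the
directions satisfy `v₁ = v₃`, `v₂ = v₄` and `v₁ ≠ v₂`. -/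
theorem eight_cycle_directions {F : Type*} [Field F] [Fintype F]
    (p : Fin 4 → (Fin 4 → F)) (x : Fin 4 → (Fin 4 → F)) (z : Fin 4 → F)
    (L : Fin 4 → Set (Fin 4 → F))
    (hL : ∀ i, L i = lineThrough (x i) (z i))
    (hp : Function.Injective p) (hLinj : Function.Injective L)
    (hinc : ∀ i : Fin 4, p i ∈ L i ∧ p (i + 1) ∈ L i) :
    mvec (z 0) = mvec (z 2) ∧ mvec (z 1) = mvec (z 3) ∧ mvec (z 0) ≠ mvec (z 1) := by
  -- adjacent directions are distinct
  have hzadj : ∀ i : Fin 4, z i ≠ z (i + 1) := by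
    intro i h
    have hi1 := (hinc i).2
    have hi2 := (hinc (i + 1)).1
    rw [hL i] at hi1
    rw [hL (i + 1)] at hi2
    have e1 : L i = lineThrough (p (i + 1)) (z i) := by
      rw [hL i]; exact lineThrough_eq_of_mem hi1
    have e2 : L (i + 1) = lineThrough (p (i + 1)) (z i) := by
      rw [hL (i + 1), h]; exact lineThrough_eq_of_mem hi2
    have : i = i + 1 := hLinj (e1.trans e2.symm)
    omega
  -- differences along the cycle
  have hdiff : ∀ i : Fin 4, ∃ c : F, c ≠ 0 ∧ p (i + 1) - p i = c • mvec (z i) := by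
    intro i
    have h1 := (hinc i).1
    have h2 := (hinc i).2
    rw [hL i] at h1 h2
    obtain ⟨a, ha⟩ := h1
    obtain ⟨b, hb⟩ := h2
    refine ⟨b - a, ?_, by rw [ha, hb]; module⟩
    intro h
    have hba : b = a := sub_eq_zero.mp h
    have : p (i + 1) = p i := by rw [ha, hb, hba]
    have hii : i + 1 = i := hp this
    omega
  choose c hc0 hcd using hdiff
  have hsum : c 0 • mvec (z 0) + c 1 • mvec (z 1) + c 2 • mvec (z 2) + c 3 • mvec (z 3)
      = 0 := by
    rw [← hcd 0, ← hcd 1, ← hcd 2, ← hcd 3]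
    have e0 : (0 : Fin 4) + 1 = 1 := rfl
    have e1 : (1 : Fin 4) + 1 = 2 := rfl
    have e2 : (2 : Fin 4) + 1 = 3 := rfl
    have e3 : (3 : Fin 4) + 1 = 0 := rfl
    rw [e0, e1, e2, e3]
    module
  have h0 := congrFun hsum 0
  have h1 := congrFun hsum 1
  have h2 := congrFun hsum 2
  have h3 := congrFun hsum 3
  simp only [mvec, Pi.add_apply, Pi.smul_apply, Pi.zero_apply, smul_eq_mul,
    Matrix.cons_val_zero, Matrix.cons_val_one, Matrix.head_cons,
    Matrix.cons_val_two, Matrix.tail_cons, Matrix.cons_val_three] at h0 h1 h2 h3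
  have hz01 : z 0 ≠ z 1 := hzadj 0
  have hz12 : z 1 ≠ z 2 := hzadj 1
  have hz23 : z 2 ≠ z 3 := hzadj 2
  have hz30 : z 3 ≠ z 0 := hzadj 3
  have key0 : c 0 * ((z 0 - z 1) * (z 0 - z 2) * (z 0 - z 3)) = 0 := by
    linear_combination h3 - (z 1 + z 2 + z 3) * h2 +
      (z 1 * z 2 + z 1 * z 3 + z 2 * z 3) * h1 - z 1 * z 2 * z 3 * h0
  have key1 : c 1 * ((z 1 - z 0) * (z 1 - z 2) * (z 1 - z 3)) = 0 := by
    linear_combination h3 - (z 0 + z 2 + z 3) * h2 +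
      (z 0 * z 2 + z 0 * z 3 + z 2 * z 3) * h1 - z 0 * z 2 * z 3 * h0
  have hz02 : z 0 = z 2 := by
    by_contra hne
    have := mul_ne_zero (hc0 0) (mul_ne_zero (mul_ne_zero
      (sub_ne_zero.mpr hz01) (sub_ne_zero.mpr hne)) (sub_ne_zero.mpr (Ne.symm hz30)))
    exact this key0
  have hz13 : z 1 = z 3 := by
    by_contra hne
    have := mul_ne_zero (hc0 1) (mul_ne_zero (mul_ne_zero
      (sub_ne_zero.mpr (Ne.symm hz01)) (sub_ne_zero.mpr hz12)) (sub_ne_zero.mpr hne))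
    exact this key1
  refine ⟨by rw [hz02], by rw [hz13], ?_⟩
  intro h
  have := congrFun h 1
  simp [mvec] at this
  exact hz01 this
end
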